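/- arXiv:2501.15805 — 2 statements merged into one kernel-verified Lean document; each statement's English description precedes it below -/
import Mathlib

section
/- Let n ≥ 3 and u a smooth function on the round unit sphere Sⁿ⁻¹ satisfying pointwise (n−1)(n−6)u² − 2(n−4) u Δu − 8|∇u|² + (Δu)² − |∇²u|² = 0. If n ≠ 6, then u ≡ 0. -/
open scoped RealInnerProductSpace
open MeasureTheory Metric
open scoped ContDiff

noncomputable section

/-- `n`-dimensional Euclidean space. -/
abbrev Euc (n : ℕ) := EuclideanSpace ℝ (Fin n)

/-- The `i`-th standard basis vector. -/
def bvec (n : ℕ) (i : Fin n) : Euc n := EuclideanSpace.single i 1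

/-- Partial derivative `∂f/∂xᵢ`. -/
def ePd {n : ℕ} (f : Euc n → ℝ) (i : Fin n) (x : Euc n) : ℝ := fderiv ℝ f x (bvec n i)

/-- Euclidean Laplacian `Δf = ∑ i ∂²f/∂xᵢ²`. -/
def eLap {n : ℕ} (f : Euc n → ℝ) (x : Euc n) : ℝ := ∑ i, ePd (ePd f i) i x

/-- Hessian component `∂²f/∂xᵢ∂xⱼ`. -/
def eHess {n : ℕ} (f : Euc n → ℝ) (i j : Fin n) (x : Euc n) : ℝ := ePd (ePd f j) i x

/-- Squared Frobenius norm of the Euclidean Hessian. -/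
def eHessSq {n : ℕ} (f : Euc n → ℝ) (x : Euc n) : ℝ := ∑ i, ∑ j, (eHess f i j x) ^ 2

/-- Squared norm of the Euclidean gradient. -/
def eGradSq {n : ℕ} (f : Euc n → ℝ) (x : Euc n) : ℝ := ∑ i, (ePd f i x) ^ 2

/-- The 0-homogeneous extension of (the restriction to the unit sphere of) `u`. -/
def sphExt {n : ℕ} (u : Euc n → ℝ) (x : Euc n) : ℝ := u (‖x‖⁻¹ • x)

/-- Laplace–Beltrami operator on the unit sphere `Sⁿ⁻¹`: at a point `θ` of the sphere it is
the Euclidean Laplacian of the 0-homogeneous extension. -/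
def sphLap {n : ℕ} (u : Euc n → ℝ) (θ : Euc n) : ℝ := eLap (sphExt u) θ

/-- Squared norm of the spherical gradient of `u` at `θ ∈ Sⁿ⁻¹`: the 0-homogeneous
extension has vanishing radial derivative, so this is the Euclidean gradient squared. -/
def sphGradSq {n : ℕ} (u : Euc n → ℝ) (θ : Euc n) : ℝ := eGradSq (sphExt u) θ

/-- Squared norm of the spherical (Riemannian) Hessian of `u` at `θ ∈ Sⁿ⁻¹`: the Euclidean
Hessian of the 0-homogeneous extension has tangential block equal to the spherical Hessian,
vanishing radial-radial entry and mixed entries `-∇_θ u`, whence the correction term. -/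
def sphHessSq {n : ℕ} (u : Euc n → ℝ) (θ : Euc n) : ℝ :=
  eHessSq (sphExt u) θ - 2 * eGradSq (sphExt u) θ

/-- Smoothness of a function on the sphere, phrased via its 0-homogeneous extension. -/
def SphSmooth {n : ℕ} (u : Euc n → ℝ) : Prop :=
  ContDiffOn ℝ (⊤ : ℕ∞) (sphExt u) {x : Euc n | x ≠ 0}


section
open scoped ContDiff
namespace SphAux
variable {n : ℕ}

def Ω (n : ℕ) : Set (Euc n) := {x | x ≠ 0}

lemma isOpen_Ω : IsOpen (Ω n) := isOpen_ne

lemma mem_Ω {x : Euc n} (hx : x ≠ 0) : x ∈ Ω n := hx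

-- differentiability at points of Ω
lemma diffAt {F : Type*} [NormedAddCommGroup F] [NormedSpace ℝ F] {f : Euc n → F}
    (hf : ContDiffOn ℝ ∞ f (Ω n)) {x : Euc n} (hx : x ∈ Ω n) :
    DifferentiableAt ℝ f x :=
  (hf.contDiffAt (isOpen_Ω.mem_nhds hx)).differentiableAt (by norm_num)

lemma contDiffOn_ePd {f : Euc n → ℝ} (hf : ContDiffOn ℝ ∞ f (Ω n)) (i : Fin n) :
    ContDiffOn ℝ ∞ (ePd f i) (Ω n) := by
  have h := ((contDiffOn_infty_iff_fderiv_of_isOpen isOpen_Ω).1 hf).2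
  exact h.clm_apply contDiffOn_const

lemma contDiffOn_fderiv {f : Euc n → ℝ} (hf : ContDiffOn ℝ ∞ f (Ω n)) :
    ContDiffOn ℝ ∞ (fderiv ℝ f) (Ω n) :=
  ((contDiffOn_infty_iff_fderiv_of_isOpen isOpen_Ω).1 hf).2

-- product rule
lemma ePd_mul {g h : Euc n → ℝ} {x : Euc n} (hg : DifferentiableAt ℝ g x)
    (hh : DifferentiableAt ℝ h x) (i : Fin n) :
    ePd (fun y => g y * h y) i x = ePd g i x * h x + g x * ePd h i x := by
  unfold ePd
  rw [fderiv_fun_mul hg hh]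
  simp [mul_comm]
  ring

-- sum rule
lemma ePd_sum {ι : Type*} (s : Finset ι) {F : ι → Euc n → ℝ} {x : Euc n}
    (hF : ∀ j ∈ s, DifferentiableAt ℝ (F j) x) (i : Fin n) :
    ePd (fun y => ∑ j ∈ s, F j y) i x = ∑ j ∈ s, ePd (F j) i x := by
  unfold ePd
  rw [fderiv_fun_sum hF]
  simp

-- congruence on an open set
lemma ePd_congr {g h : Euc n → ℝ} {x : Euc n} (hx : x ∈ Ω n)
    (hgh : ∀ y ∈ Ω n, g y = h y) (i : Fin n) : ePd g i x = ePd h i x := by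
  unfold ePd
  rw [Filter.EventuallyEq.fderiv_eq ((isOpen_Ω.eventually_mem hx).mono hgh)]

end SphAux

namespace SphAux
variable {n : ℕ}

def rho (x : Euc n) : ℝ := ⟪x, x⟫

lemma rho_eq_norm_sq (x : Euc n) : rho x = ‖x‖ ^ 2 := real_inner_self_eq_norm_sq x

lemma rho_nonneg (x : Euc n) : 0 ≤ rho x := real_inner_self_nonneg

lemma contDiff_rho : ContDiff ℝ ∞ (rho (n := n)) := ContDiff.inner ℝ contDiff_id contDiff_id

lemma hasFDerivAt_rho (x : Euc n) :
    HasFDerivAt rho (2 • (innerSL ℝ x : Euc n →L[ℝ] ℝ)) x := by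
  have h1 : DifferentiableAt ℝ (id : Euc n → Euc n) x := differentiableAt_id
  have := (contDiff_rho.differentiable (by norm_num)).differentiableAt (x := x)
  refine this.hasFDerivAt.congr_fderiv ?_
  ext v
  rw [show rho = fun y : Euc n => ⟪id y, id y⟫ from rfl, fderiv_inner_apply (𝕜 := ℝ) h1 h1]
  simp [real_inner_comm]
  rw [two_mul]

lemma ePd_rho (x : Euc n) (i : Fin n) : ePd rho i x = 2 * x i := by
  unfold ePd
  rw [(hasFDerivAt_rho x).fderiv]
  simp [bvec, EuclideanSpace.inner_single_right]

lemma sum_sq_eq_rho (x : Euc n) : ∑ i, x i ^ 2 = rho x := by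
  rw [rho_eq_norm_sq, EuclideanSpace.norm_sq_eq]; simp [sq_abs]

-- x as combination of basis vectors
lemma eq_sum_smul (x : Euc n) : x = ∑ i, x i • bvec n i := by
  ext j
  rw [WithLp.ofLp_sum, Finset.sum_apply]
  simp [bvec, EuclideanSpace.single_apply]

lemma sum_x_ePd (g : Euc n → ℝ) (x : Euc n) :
    ∑ i, x i * ePd g i x = fderiv ℝ g x x := by
  have h : fderiv ℝ g x x = fderiv ℝ g x (∑ i, x i • bvec n i) := by rw [← eq_sum_smul x]
  rw [h, map_sum]
  simp [ePd]

-- chain rule with smooth cutoff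
lemma ePd_cut_mul {χ : ℝ → ℝ} (hχ : ContDiff ℝ ∞ χ) {G : Euc n → ℝ} {x : Euc n}
    (hG : DifferentiableAt ℝ G x) (i : Fin n) :
    ePd (fun y => χ (rho y) * G y) i x
      = deriv χ (rho x) * (2 * x i) * G x + χ (rho x) * ePd G i x := by
  have hc : DifferentiableAt ℝ (fun y => χ (rho y)) x :=
    ((hχ.differentiable (by norm_num)) (rho x)).comp x
      ((contDiff_rho.differentiable (by norm_num)) x)
  rw [ePd_mul hc hG]
  congr 1
  unfold ePd
  have hd : HasDerivAt χ (deriv χ (rho x)) (rho x) :=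
    ((hχ.differentiable (by norm_num)) (rho x)).hasDerivAt
  have h2 : HasFDerivAt (fun y => χ (rho y)) (deriv χ (rho x) • 2 • (innerSL ℝ x : Euc n →L[ℝ] ℝ)) x :=
    hd.comp_hasFDerivAt x (hasFDerivAt_rho x)
  rw [h2.fderiv]
  simp [bvec, EuclideanSpace.inner_single_right]

end SphAux

namespace SphAux
variable {n : ℕ}

-- scaled-point derivative relation
lemma ePd_hom {g : Euc n → ℝ} (hg : ContDiffOn ℝ ∞ g (Ω n)) {c a : ℝ} (hc : 0 < c)
    (hgc : ∀ y ∈ Ω n, g (c • y) = a * g y) {x : Euc n} (hx : x ∈ Ω n) (i : Fin n) :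
    c * ePd g i (c • x) = a * ePd g i x := by
  have hcx : c • x ∈ Ω n := by
    simp only [Ω, Set.mem_setOf_eq] at hx ⊢
    exact smul_ne_zero (ne_of_gt hc) hx
  have hdg : DifferentiableAt ℝ g (c • x) := diffAt hg hcx
  have hsc : HasFDerivAt (fun y : Euc n => c • y)
      (c • ContinuousLinearMap.id ℝ (Euc n)) x :=
    (hasFDerivAt_id x).const_smul c
  have hcomp : HasFDerivAt (fun y => g (c • y))
      ((fderiv ℝ g (c • x)).comp (c • ContinuousLinearMap.id ℝ (Euc n))) x :=
    hdg.hasFDerivAt.comp x hsc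
  have heq : fderiv ℝ (fun y => g (c • y)) x = fderiv ℝ (fun y => a * g y) x :=
    Filter.EventuallyEq.fderiv_eq <| (isOpen_Ω.eventually_mem hx).mono fun y hy => hgc y hy
  have h2 : fderiv ℝ (fun y => a * g y) x = a • fderiv ℝ g x :=
    fderiv_const_mul (diffAt hg hx) a
  have := congrFun (congrArg DFunLike.coe (hcomp.fderiv.symm.trans (heq.trans h2))) (bvec n i)
  simpa [ePd, mul_comm] using this

-- Euler identity for homogeneous functions
lemma euler_hom {g : Euc n → ℝ} {x : Euc n} (hx : x ∈ Ω n)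
    (hg : DifferentiableAt ℝ g x) (k : ℤ)
    (hgc : ∀ c : ℝ, 0 < c → g (c • x) = c ^ k * g x) :
    fderiv ℝ g x x = k * g x := by
  have hψ : HasDerivAt (fun c : ℝ => c • x) ((1:ℝ) • x) 1 := (hasDerivAt_id 1).smul_const x
  have hφ : HasDerivAt (fun c : ℝ => g (c • x)) (fderiv ℝ g x x) 1 := by
    have hgx : HasFDerivAt g (fderiv ℝ g x) ((1:ℝ) • x) := by
      rw [one_smul]; exact hg.hasFDerivAt
    have := hgx.comp_hasDerivAt 1 hψ
    simp only [one_smul] at this; exact this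
  have hz : HasDerivAt (fun c : ℝ => c ^ k * g x) ((k : ℝ) * g x) 1 := by
    have := (hasDerivAt_zpow k (1:ℝ) (Or.inl one_ne_zero)).mul_const (g x)
    simpa using this
  have hev : (fun c : ℝ => g (c • x)) =ᶠ[nhds 1] (fun c : ℝ => c ^ k * g x) := by
    filter_upwards [eventually_gt_nhds zero_lt_one] with c hc
    exact hgc c hc
  have := (hφ.congr_of_eventuallyEq hev.symm).unique hz
  linarith [this]

-- symmetry of second partials
lemma ePd_symm {g : Euc n → ℝ} (hg : ContDiffOn ℝ ∞ g (Ω n)) {x : Euc n} (hx : x ∈ Ω n)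
    (a b : Fin n) : ePd (ePd g b) a x = ePd (ePd g a) b x := by
  have hsym : IsSymmSndFDerivAt ℝ g x :=
    (hg.contDiffAt (isOpen_Ω.mem_nhds hx)).isSymmSndFDerivAt (by
      rw [minSmoothness_of_isRCLikeNormedField]
      rw [show ((2:WithTop ℕ∞)) = ((2 : ℕ∞) : WithTop ℕ∞) from rfl]
      exact WithTop.coe_le_coe.2 le_top)
  have hder : DifferentiableAt ℝ (fderiv ℝ g) x := diffAt (contDiffOn_fderiv hg) hx
  have key : ∀ a b : Fin n, ePd (ePd g b) a x = fderiv ℝ (fderiv ℝ g) x (bvec n a) (bvec n b) := by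
    intro a b
    have hA : HasFDerivAt (ePd g b)
        ((ContinuousLinearMap.apply ℝ ℝ (bvec n b)).comp (fderiv ℝ (fderiv ℝ g) x)) x :=
      (ContinuousLinearMap.apply ℝ ℝ (bvec n b)).hasFDerivAt.comp x hder.hasFDerivAt
    show fderiv ℝ (ePd g b) x (bvec n a) = _
    rw [hA.fderiv]
    rfl
  rw [key a b, key b a, hsym (bvec n a) (bvec n b)]

end SphAux

namespace SphAux
variable {n : ℕ}

lemma cut_smooth {χ : ℝ → ℝ} (hχ : ContDiff ℝ ∞ χ) (h0 : ∀ s < 2, χ s = 0)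
    {G : Euc n → ℝ} (hG : ContDiffOn ℝ ∞ G (Ω n)) :
    ContDiff ℝ ∞ (fun x => χ (rho x) * G x) := by
  rw [contDiff_iff_contDiffAt]
  intro x
  by_cases hx : x = 0
  · subst hx
    have hev : (fun y : Euc n => χ (rho y) * G y) =ᶠ[nhds 0] (fun _ => (0:ℝ)) := by
      have hcont : Continuous (rho (n := n)) := contDiff_rho.continuous
      have : ∀ᶠ y : Euc n in nhds 0, rho y < 2 := by
        have := hcont.continuousAt (x := (0 : Euc n))
        have h02 : rho (0 : Euc n) < 2 := by simp [rho]
        exact this.eventually_lt continuousAt_const h02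
      filter_upwards [this] with y hy
      simp [h0 _ hy]
    exact (contDiffAt_const (c := (0:ℝ))).congr_of_eventuallyEq hev
  · exact ((hχ.contDiffAt).comp x contDiff_rho.contDiffAt).mul
      (hG.contDiffAt (isOpen_Ω.mem_nhds hx))

lemma cut_support {χ : ℝ → ℝ} (h7 : ∀ s > 6, χ s = 0) (G : Euc n → ℝ) :
    HasCompactSupport (fun x => χ (rho x) * G x) := by
  apply HasCompactSupport.intro (isCompact_closedBall (0 : Euc n) 3)
  intro x hx
  have h3 : (3:ℝ) < ‖x‖ := by simpa [dist_eq_norm] using hx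
  have : (6:ℝ) < rho x := by
    rw [rho_eq_norm_sq]
    nlinarith
  simp [h7 _ this]

lemma cut_integrable {χ : ℝ → ℝ} (hχ : ContDiff ℝ ∞ χ) (h0 : ∀ s < 2, χ s = 0)
    (h7 : ∀ s > 6, χ s = 0) {G : Euc n → ℝ} (hG : ContDiffOn ℝ ∞ G (Ω n)) :
    Integrable (fun x => χ (rho x) * G x) (volume : Measure (Euc n)) :=
  (cut_smooth hχ h0 hG).continuous.integrable_of_hasCompactSupport (cut_support h7 G)

-- divergence theorem
lemma integral_ePd_zero {W : Euc n → ℝ} (hW : ContDiff ℝ ∞ W) (hs : HasCompactSupport W)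
    (i : Fin n) : ∫ x, ePd W i x = 0 := by
  have hdiff : Differentiable ℝ W := hW.differentiable (by norm_num)
  have hcf : Continuous (fun x => fderiv ℝ W x (bvec n i)) :=
    (ContinuousLinearMap.apply ℝ ℝ (bvec n i)).continuous.comp
      (hW.continuous_fderiv (by norm_num))
  have hsf : HasCompactSupport (fun x => fderiv ℝ W x (bvec n i)) :=
    (hs.fderiv (𝕜 := ℝ)).comp_left (g := fun L : Euc n →L[ℝ] ℝ => L (bvec n i)) rfl
  have hint : Integrable (fun x => fderiv ℝ W x (bvec n i)) (volume : Measure (Euc n)) :=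
    hcf.integrable_of_hasCompactSupport hsf
  have key := integral_mul_fderiv_eq_neg_fderiv_mul_of_integrable
    (f := W) (g := fun _ : Euc n => (1:ℝ)) (v := bvec n i) (μ := (volume : Measure (Euc n)))
    (by simpa using hint) (by simp) ?_ (fun x _ => hdiff x) (fun x _ => differentiableAt_const (1:ℝ))
  · simp only [fderiv_const, Pi.zero_apply, ContinuousLinearMap.zero_apply, mul_zero, mul_one,
      integral_zero, zero_eq_neg] at key
    simpa [ePd] using key
  · simpa using hW.continuous.integrable_of_hasCompactSupport hs

lemma integral_div_sum_zero (W : Fin n → Euc n → ℝ) (hW : ∀ i, ContDiff ℝ ∞ (W i))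
    (hs : ∀ i, HasCompactSupport (W i)) :
    ∫ x, ∑ i, ePd (W i) i x = 0 := by
  have hint : ∀ i : Fin n, Integrable (fun x => ePd (W i) i x) (volume : Measure (Euc n)) := by
    intro i
    have hc : Continuous (fun x => fderiv ℝ (W i) x (bvec n i)) :=
      (ContinuousLinearMap.apply ℝ ℝ (bvec n i)).continuous.comp
        ((hW i).continuous_fderiv (by norm_num))
    have hsf : HasCompactSupport (fun x => fderiv ℝ (W i) x (bvec n i)) :=
      ((hs i).fderiv (𝕜 := ℝ)).comp_left (g := fun L : Euc n →L[ℝ] ℝ => L (bvec n i)) rfl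
    exact hc.integrable_of_hasCompactSupport hsf
  rw [integral_finset_sum _ (fun i _ => hint i)]
  simp [integral_ePd_zero (hW _) (hs _)]

end SphAux

namespace SphAux
variable {n : ℕ} {u : Euc n → ℝ}

lemma sphExt_smul {c : ℝ} (hc : 0 < c) {x : Euc n} (hx : x ≠ 0) :
    sphExt u (c • x) = sphExt u x := by
  unfold sphExt
  have hnx : ‖x‖ ≠ 0 := norm_ne_zero_iff.2 hx
  rw [norm_smul, smul_smul, Real.norm_eq_abs, abs_of_pos hc]
  have h : (c * ‖x‖)⁻¹ * c = ‖x‖⁻¹ := by field_simp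
  rw [h]

lemma hP (hsm : ContDiffOn ℝ ∞ (sphExt u) (Ω n)) (i : Fin n) :
    ContDiffOn ℝ ∞ (ePd (sphExt u) i) (Ω n) := contDiffOn_ePd hsm i

lemma hQ (hsm : ContDiffOn ℝ ∞ (sphExt u) (Ω n)) (i j : Fin n) :
    ContDiffOn ℝ ∞ (ePd (ePd (sphExt u) j) i) (Ω n) := contDiffOn_ePd (hP hsm j) i

lemma hLap (hsm : ContDiffOn ℝ ∞ (sphExt u) (Ω n)) :
    ContDiffOn ℝ ∞ (eLap (sphExt u)) (Ω n) := by
  unfold eLap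
  exact ContDiffOn.sum (fun i _ => hQ hsm i i)

lemma hGrad (hsm : ContDiffOn ℝ ∞ (sphExt u) (Ω n)) :
    ContDiffOn ℝ ∞ (eGradSq (sphExt u)) (Ω n) := by
  unfold eGradSq
  exact ContDiffOn.sum (fun i _ => (hP hsm i).pow 2)

lemma P_hom (hsm : ContDiffOn ℝ ∞ (sphExt u) (Ω n)) {c : ℝ} (hc : 0 < c) {y : Euc n}
    (hy : y ∈ Ω n) (i : Fin n) :
    ePd (sphExt u) i (c • y) = c⁻¹ * ePd (sphExt u) i y := by
  have h := ePd_hom hsm hc (a := 1)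
    (fun z hz => by rw [sphExt_smul hc hz, one_mul]) hy i
  have hc' : c ≠ 0 := ne_of_gt hc
  field_simp at h ⊢
  linarith

lemma Q_hom (hsm : ContDiffOn ℝ ∞ (sphExt u) (Ω n)) {c : ℝ} (hc : 0 < c) {y : Euc n}
    (hy : y ∈ Ω n) (i j : Fin n) :
    ePd (ePd (sphExt u) j) i (c • y) = c⁻¹ * c⁻¹ * ePd (ePd (sphExt u) j) i y := by
  have h := ePd_hom (hP hsm j) hc (a := c⁻¹)
    (fun z hz => P_hom hsm hc hz j) hy i
  have hc' : c ≠ 0 := ne_of_gt hc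
  field_simp at h ⊢
  linarith

lemma lap_hom (hsm : ContDiffOn ℝ ∞ (sphExt u) (Ω n)) {c : ℝ} (hc : 0 < c) {y : Euc n}
    (hy : y ∈ Ω n) :
    eLap (sphExt u) (c • y) = c⁻¹ * c⁻¹ * eLap (sphExt u) y := by
  unfold eLap
  rw [Finset.mul_sum]
  exact Finset.sum_congr rfl fun i _ => Q_hom hsm hc hy i i

lemma grad_hom (hsm : ContDiffOn ℝ ∞ (sphExt u) (Ω n)) {c : ℝ} (hc : 0 < c) {y : Euc n}
    (hy : y ∈ Ω n) :
    eGradSq (sphExt u) (c • y) = c⁻¹ * c⁻¹ * eGradSq (sphExt u) y := by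
  unfold eGradSq
  rw [Finset.mul_sum]
  refine Finset.sum_congr rfl fun i _ => ?_
  rw [P_hom hsm hc hy i]
  ring

lemma hess_hom (hsm : ContDiffOn ℝ ∞ (sphExt u) (Ω n)) {c : ℝ} (hc : 0 < c) {y : Euc n}
    (hy : y ∈ Ω n) :
    eHessSq (sphExt u) (c • y) = (c⁻¹ * c⁻¹) ^ 2 * eHessSq (sphExt u) y := by
  unfold eHessSq
  rw [Finset.mul_sum]
  refine Finset.sum_congr rfl fun i _ => ?_
  rw [Finset.mul_sum]
  refine Finset.sum_congr rfl fun j _ => ?_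
  unfold eHess
  rw [Q_hom hsm hc hy i j]
  ring

lemma euler0 (hsm : ContDiffOn ℝ ∞ (sphExt u) (Ω n)) {x : Euc n} (hx : x ∈ Ω n) :
    fderiv ℝ (sphExt u) x x = 0 := by
  have h := euler_hom hx (diffAt hsm hx) 0 (fun c hc => by
    rw [sphExt_smul hc hx]; simp)
  simpa using h

lemma eulerP (hsm : ContDiffOn ℝ ∞ (sphExt u) (Ω n)) {x : Euc n} (hx : x ∈ Ω n) (j : Fin n) :
    fderiv ℝ (ePd (sphExt u) j) x x = -(ePd (sphExt u) j x) := by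
  have h := euler_hom hx (diffAt (hP hsm j) hx) (-1) (fun c hc => by
    rw [P_hom hsm hc hx j, zpow_neg_one])
  rw [h]; push_cast; ring

lemma eulerG (hsm : ContDiffOn ℝ ∞ (sphExt u) (Ω n)) {x : Euc n} (hx : x ∈ Ω n) :
    fderiv ℝ (eGradSq (sphExt u)) x x = -2 * eGradSq (sphExt u) x := by
  have h := euler_hom hx (diffAt (hGrad hsm) hx) (-2) (fun c hc => by
    rw [grad_hom hsm hc hx]
    rw [show (c:ℝ) ^ (-2:ℤ) = c⁻¹ * c⁻¹ by rw [zpow_neg, zpow_two, mul_inv]])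
  rw [h]; push_cast; ring

end SphAux

namespace SphAux
variable {n : ℕ} {u : Euc n → ℝ}

lemma ePd_sub {g h : Euc n → ℝ} {x : Euc n} (hg : DifferentiableAt ℝ g x)
    (hh : DifferentiableAt ℝ h x) (i : Fin n) :
    ePd (fun y => g y - h y) i x = ePd g i x - ePd h i x := by
  unfold ePd
  rw [fderiv_fun_sub hg hh]
  simp

def bumpF : ContDiffBump (4:ℝ) := ⟨1, 2, one_pos, one_lt_two⟩

def etaB : ℝ → ℝ := ⇑bumpF

lemma etaB_smooth : ContDiff ℝ ∞ etaB := bumpF.contDiff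

lemma etaB_nonneg (s : ℝ) : 0 ≤ etaB s := bumpF.nonneg

lemma etaB_lt {s : ℝ} (hs : s < 2) : etaB s = 0 := by
  apply bumpF.zero_of_le_dist
  rw [Real.dist_eq]
  rw [show bumpF.rOut = 2 from rfl]
  rw [abs_of_nonpos (by linarith)]
  linarith

lemma etaB_gt {s : ℝ} (hs : 6 < s) : etaB s = 0 := by
  apply bumpF.zero_of_le_dist
  rw [Real.dist_eq, show bumpF.rOut = 2 from rfl, abs_of_nonneg (by linarith)]
  linarith

lemma etaB_four : etaB 4 = 1 :=
  bumpF.one_of_mem_closedBall (by simp [bumpF])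

def w1 : ℝ → ℝ := fun s => etaB s * s
def w2 : ℝ → ℝ := fun s => etaB s * s ^ 2

lemma w1_smooth : ContDiff ℝ ∞ w1 := etaB_smooth.mul contDiff_id
lemma w2_smooth : ContDiff ℝ ∞ w2 := etaB_smooth.mul (contDiff_id.pow 2)
lemma w1_lt {s : ℝ} (hs : s < 2) : w1 s = 0 := by simp [w1, etaB_lt hs]
lemma w1_gt {s : ℝ} (hs : 6 < s) : w1 s = 0 := by simp [w1, etaB_gt hs]
lemma w2_lt {s : ℝ} (hs : s < 2) : w2 s = 0 := by simp [w2, etaB_lt hs]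
lemma w2_gt {s : ℝ} (hs : 6 < s) : w2 s = 0 := by simp [w2, etaB_gt hs]

lemma deriv_lt {χ : ℝ → ℝ} (h0 : ∀ t : ℝ, t < 2 → χ t = 0) {s : ℝ} (hs : s < 2) :
    deriv χ s = 0 := by
  have hev : χ =ᶠ[nhds s] (fun _ => (0:ℝ)) := by
    filter_upwards [eventually_lt_nhds hs] with t ht
    exact h0 t ht
  rw [hev.deriv_eq]
  simp

lemma deriv_gt {χ : ℝ → ℝ} (h0 : ∀ t : ℝ, 6 < t → χ t = 0) {s : ℝ} (hs : 6 < s) :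
    deriv χ s = 0 := by
  have hev : χ =ᶠ[nhds s] (fun _ => (0:ℝ)) := by
    filter_upwards [eventually_gt_nhds hs] with t ht
    exact h0 t ht
  rw [hev.deriv_eq]
  simp

lemma ae_off_zero (hn : 0 < n) {g h : Euc n → ℝ} (hgh : ∀ x ∈ Ω n, g x = h x) :
    g =ᵐ[(volume : Measure (Euc n))] h := by
  haveI : Nontrivial (Euc n) := by
    refine ⟨⟨0, bvec n ⟨0, hn⟩, fun h0 => ?_⟩⟩
    have := congrArg (fun v : Euc n => v ⟨0, hn⟩) h0
    simp [bvec, EuclideanSpace.single_apply] at this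
  have hsub : {x : Euc n | g x ≠ h x} ⊆ {(0 : Euc n)} := by
    intro x hx
    by_contra hx0
    exact hx (hgh x (by simpa [Ω, Set.mem_singleton_iff] using hx0))
  exact measure_mono_null hsub (measure_singleton 0)

-- Identity I
lemma idI (hn : 0 < n) (hsm : ContDiffOn ℝ ∞ (sphExt u) (Ω n)) :
    ∫ x : Euc n, w1 (rho x) * (eGradSq (sphExt u) x + sphExt u x * eLap (sphExt u) x) = 0 := by
  set F := sphExt u with hF
  have key := integral_div_sum_zero (fun i x => w1 (rho x) * (F x * ePd F i x))
    (fun i => cut_smooth w1_smooth (fun s hs => w1_lt hs) (hsm.mul (hP hsm i)))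
    (fun i => cut_support (fun s hs => w1_gt hs) _)
  rw [← key]
  apply integral_congr_ae (ae_off_zero hn ?_).symm
  intro x hx
  have hdF : DifferentiableAt ℝ F x := diffAt hsm hx
  have hdP : ∀ i, DifferentiableAt ℝ (ePd F i) x := fun i => diffAt (hP hsm i) hx
  have step : ∀ i : Fin n, ePd (fun y => w1 (rho y) * (F y * ePd F i y)) i x
      = deriv w1 (rho x) * (2 * x i) * (F x * ePd F i x)
        + w1 (rho x) * (ePd F i x * ePd F i x + F x * ePd (ePd F i) i x) := by
    intro i
    rw [ePd_cut_mul w1_smooth (hdF.fun_mul (hdP i)) i, ePd_mul hdF (hdP i) i]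
  have hsplit : ∑ i, ePd (fun y => w1 (rho y) * (F y * ePd F i y)) i x
      = ∑ i, deriv w1 (rho x) * (2 * x i) * (F x * ePd F i x)
        + ∑ i, w1 (rho x) * (ePd F i x * ePd F i x + F x * ePd (ePd F i) i x) := by
    rw [← Finset.sum_add_distrib]
    exact Finset.sum_congr rfl fun i _ => step i
  have h1 : ∑ i, deriv w1 (rho x) * (2 * x i) * (F x * ePd F i x)
      = (deriv w1 (rho x) * 2 * F x) * ∑ i, x i * ePd F i x := by
    rw [Finset.mul_sum]
    exact Finset.sum_congr rfl fun i _ => by ring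
  have h2 : ∑ i, w1 (rho x) * (ePd F i x * ePd F i x + F x * ePd (ePd F i) i x)
      = w1 (rho x) * (eGradSq F x + F x * eLap F x) := by
    simp only [eGradSq, eLap, mul_add, Finset.mul_sum, ← Finset.sum_add_distrib]
    exact Finset.sum_congr rfl fun i _ => by ring
  rw [hsplit, h1, h2, sum_x_ePd, euler0 hsm hx]
  ring

end SphAux

namespace SphAux
variable {n : ℕ} {u : Euc n → ℝ}

lemma ePd_proj (i j : Fin n) (x : Euc n) :
    ePd (fun y : Euc n => y i) j x = if i = j then 1 else 0 := by
  unfold ePd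
  have hfd : HasFDerivAt (fun y : Euc n => y i) (EuclideanSpace.proj (𝕜 := ℝ) i) x :=
    (EuclideanSpace.proj (𝕜 := ℝ) i).hasFDerivAt
  rw [hfd.fderiv]
  by_cases h : i = j
  · simp [bvec, EuclideanSpace.single_apply, EuclideanSpace.proj, h]
  · simp [bvec, EuclideanSpace.single_apply, EuclideanSpace.proj, Ne.symm h, h]

-- Identity III
lemma idIII (hn : 0 < n) (hsm : ContDiffOn ℝ ∞ (sphExt u) (Ω n)) :
    ∫ x : Euc n, (2 * deriv w1 (rho x) * rho x * eGradSq (sphExt u) x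
      + ((n:ℝ) - 2) * (w1 (rho x) * eGradSq (sphExt u) x)) = 0 := by
  set F := sphExt u with hF
  have hGsm : ContDiffOn ℝ ∞ (eGradSq F) (Ω n) := hGrad hsm
  have hproj : ∀ i : Fin n, ContDiffOn ℝ ∞ (fun y : Euc n => y i) (Ω n) :=
    fun i => ((EuclideanSpace.proj (𝕜 := ℝ) (i := i)).contDiff).contDiffOn
  have key := integral_div_sum_zero (fun i x => w1 (rho x) * (x i * eGradSq F x))
    (fun i => cut_smooth w1_smooth (fun s hs => w1_lt hs) ((hproj i).mul hGsm))
    (fun i => cut_support (fun s hs => w1_gt hs) _)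
  rw [← key]
  apply integral_congr_ae (ae_off_zero hn ?_).symm
  intro x hx
  have hdG : DifferentiableAt ℝ (eGradSq F) x := diffAt hGsm hx
  have hdp : ∀ i : Fin n, DifferentiableAt ℝ (fun y : Euc n => y i) x :=
    fun i => (EuclideanSpace.proj (𝕜 := ℝ) (i := i)).differentiableAt
  have step : ∀ i : Fin n, ePd (fun y => w1 (rho y) * (y i * eGradSq F y)) i x
      = deriv w1 (rho x) * (2 * x i) * (x i * eGradSq F x)
        + w1 (rho x) * (eGradSq F x + x i * ePd (eGradSq F) i x) := by
    intro i
    rw [ePd_cut_mul w1_smooth ((hdp i).fun_mul hdG) i, ePd_mul (hdp i) hdG i, ePd_proj]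
    simp
  have hsplit : ∑ i, ePd (fun y => w1 (rho y) * (y i * eGradSq F y)) i x
      = ∑ i, deriv w1 (rho x) * (2 * x i) * (x i * eGradSq F x)
        + ∑ i, w1 (rho x) * (eGradSq F x + x i * ePd (eGradSq F) i x) := by
    rw [← Finset.sum_add_distrib]
    exact Finset.sum_congr rfl fun i _ => step i
  have h1 : ∑ i, deriv w1 (rho x) * (2 * x i) * (x i * eGradSq F x)
      = 2 * deriv w1 (rho x) * eGradSq F x * ∑ i, x i ^ 2 := by
    rw [Finset.mul_sum]
    exact Finset.sum_congr rfl fun i _ => by ring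
  have h2 : ∑ i, w1 (rho x) * (eGradSq F x + x i * ePd (eGradSq F) i x)
      = (n:ℝ) * (w1 (rho x) * eGradSq F x)
        + w1 (rho x) * ∑ i, x i * ePd (eGradSq F) i x := by
    have hn' : (n:ℝ) * (w1 (rho x) * eGradSq F x)
        = ∑ _i : Fin n, w1 (rho x) * eGradSq F x := by
      rw [Finset.sum_const, Finset.card_univ, Fintype.card_fin, nsmul_eq_mul]
    rw [hn', Finset.mul_sum, ← Finset.sum_add_distrib]
    exact Finset.sum_congr rfl fun i _ => by ring
  rw [hsplit, h1, h2, sum_sq_eq_rho, sum_x_ePd, eulerG hsm hx]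
  ring

-- Identity II
lemma idII (hn : 0 < n) (hsm : ContDiffOn ℝ ∞ (sphExt u) (Ω n)) :
    ∫ x : Euc n, (w2 (rho x) * (eHessSq (sphExt u) x - (eLap (sphExt u) x) ^ 2)
      - 2 * deriv w2 (rho x) * eGradSq (sphExt u) x) = 0 := by
  set F := sphExt u with hF
  have hG2sm : ∀ i : Fin n, ContDiffOn ℝ ∞
      (fun y => (∑ j, ePd F j y * ePd (ePd F j) i y) - ePd F i y * eLap F y) (Ω n) :=
    fun i => (ContDiffOn.sum fun j _ => (hP hsm j).mul (hQ hsm i j)).sub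
      ((hP hsm i).mul (hLap hsm))
  have key := integral_div_sum_zero
    (fun i x => w2 (rho x) * ((∑ j, ePd F j x * ePd (ePd F j) i x) - ePd F i x * eLap F x))
    (fun i => cut_smooth w2_smooth (fun s hs => w2_lt hs) (hG2sm i))
    (fun i => cut_support (fun s hs => w2_gt hs) _)
  rw [← key]
  apply integral_congr_ae (ae_off_zero hn ?_).symm
  intro x hx
  have hdP : ∀ i, DifferentiableAt ℝ (ePd F i) x := fun i => diffAt (hP hsm i) hx
  have hdQ : ∀ i j, DifferentiableAt ℝ (ePd (ePd F j) i) x :=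
    fun i j => diffAt (hQ hsm i j) hx
  have hdL : DifferentiableAt ℝ (eLap F) x := diffAt (hLap hsm) hx
  have hdsum : ∀ i : Fin n, DifferentiableAt ℝ (fun y => ∑ j, ePd F j y * ePd (ePd F j) i y) x :=
    fun i => DifferentiableAt.fun_sum fun j _ => (hdP j).mul (hdQ i j)
  have hdG2 : ∀ i : Fin n, DifferentiableAt ℝ
      (fun y => (∑ j, ePd F j y * ePd (ePd F j) i y) - ePd F i y * eLap F y) x :=
    fun i => (hdsum i).sub ((hdP i).fun_mul hdL)
  -- derivative of eLap
  have hlap_pd : ∀ i : Fin n, ePd (eLap F) i x = ∑ j, ePd (ePd (ePd F j) j) i x := by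
    intro i
    rw [show eLap F = fun y => ∑ j, ePd (ePd F j) j y from rfl]
    exact ePd_sum Finset.univ (fun j _ => hdQ j j) i
  -- third derivative swap
  have hsw : ∀ i j : Fin n, ePd (ePd (ePd F j) i) i x = ePd (ePd (ePd F i) i) j x := by
    intro i j
    have e1 : ePd (ePd (ePd F j) i) i x = ePd (ePd (ePd F i) j) i x :=
      ePd_congr hx (fun y hy => ePd_symm hsm hy i j) i
    have e2 : ePd (ePd (ePd F i) j) i x = ePd (ePd (ePd F i) i) j x :=
      ePd_symm (hP hsm i) hx i j
    rw [e1, e2]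
  have step : ∀ i : Fin n,
      ePd (fun y => w2 (rho y) * ((∑ j, ePd F j y * ePd (ePd F j) i y) - ePd F i y * eLap F y)) i x
      = deriv w2 (rho x) * (2 * x i)
          * ((∑ j, ePd F j x * ePd (ePd F j) i x) - ePd F i x * eLap F x)
        + w2 (rho x) * ((∑ j, (ePd (ePd F j) i x * ePd (ePd F j) i x
              + ePd F j x * ePd (ePd (ePd F j) i) i x))
            - (ePd (ePd F i) i x * eLap F x + ePd F i x * ePd (eLap F) i x)) := by
    intro i
    rw [ePd_cut_mul w2_smooth (hdG2 i) i, ePd_sub (hdsum i) ((hdP i).fun_mul hdL) i,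
      ePd_mul (hdP i) hdL i, ePd_sum Finset.univ (fun j _ => (hdP j).fun_mul (hdQ i j)) i,
      Finset.sum_congr rfl (fun j _ => ePd_mul (hdP j) (hdQ i j) i)]
  have hsplit : (∑ i, ePd (fun y => w2 (rho y)
        * ((∑ j, ePd F j y * ePd (ePd F j) i y) - ePd F i y * eLap F y)) i x)
      = (∑ i, deriv w2 (rho x) * (2 * x i)
          * ((∑ j, ePd F j x * ePd (ePd F j) i x) - ePd F i x * eLap F x))
        + ∑ i, w2 (rho x) * ((∑ j, (ePd (ePd F j) i x * ePd (ePd F j) i x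
              + ePd F j x * ePd (ePd (ePd F j) i) i x))
            - (ePd (ePd F i) i x * eLap F x + ePd F i x * ePd (eLap F) i x)) := by
    rw [← Finset.sum_add_distrib]
    exact Finset.sum_congr rfl fun i _ => step i
  have hxS : ∑ i, x i * ∑ j, ePd F j x * ePd (ePd F j) i x = -eGradSq F x := by
    have h1 : ∀ j : Fin n, ∑ i, x i * (ePd F j x * ePd (ePd F j) i x)
        = -(ePd F j x ^ 2) := by
      intro j
      have e : ∑ i, x i * (ePd F j x * ePd (ePd F j) i x)
          = ePd F j x * ∑ i, x i * ePd (ePd F j) i x := by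
        rw [Finset.mul_sum]
        exact Finset.sum_congr rfl fun i _ => by ring
      rw [e, sum_x_ePd, eulerP hsm hx j]
      ring
    calc ∑ i, x i * ∑ j, ePd F j x * ePd (ePd F j) i x
        = ∑ i, ∑ j, x i * (ePd F j x * ePd (ePd F j) i x) :=
          Finset.sum_congr rfl fun i _ => Finset.mul_sum _ _ _
      _ = ∑ j, ∑ i, x i * (ePd F j x * ePd (ePd F j) i x) := Finset.sum_comm
      _ = ∑ j, -(ePd F j x ^ 2) := Finset.sum_congr rfl fun j _ => h1 j
      _ = -eGradSq F x := by rw [eGradSq, ← Finset.sum_neg_distrib]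
  have hS1 : (∑ i, deriv w2 (rho x) * (2 * x i)
        * ((∑ j, ePd F j x * ePd (ePd F j) i x) - ePd F i x * eLap F x))
      = -2 * deriv w2 (rho x) * eGradSq F x := by
    have e : (∑ i, deriv w2 (rho x) * (2 * x i)
          * ((∑ j, ePd F j x * ePd (ePd F j) i x) - ePd F i x * eLap F x))
        = 2 * deriv w2 (rho x) * (∑ i, x i * ∑ j, ePd F j x * ePd (ePd F j) i x)
          - 2 * deriv w2 (rho x) * eLap F x * (∑ i, x i * ePd F i x) := by
      rw [Finset.mul_sum, Finset.mul_sum, ← Finset.sum_sub_distrib]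
      exact Finset.sum_congr rfl fun i _ => by ring
    rw [e, hxS, sum_x_ePd, euler0 hsm hx]
    ring
  have hT : ∑ i, ∑ j, ePd F j x * ePd (ePd (ePd F j) i) i x
      = ∑ i, ePd F i x * ePd (eLap F) i x := by
    calc ∑ i, ∑ j, ePd F j x * ePd (ePd (ePd F j) i) i x
        = ∑ i, ∑ j, ePd F j x * ePd (ePd (ePd F i) i) j x :=
          Finset.sum_congr rfl fun i _ => Finset.sum_congr rfl fun j _ => by rw [hsw i j]
      _ = ∑ j, ∑ i, ePd F j x * ePd (ePd (ePd F i) i) j x := Finset.sum_comm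
      _ = ∑ i, ePd F i x * ePd (eLap F) i x := by
          refine Finset.sum_congr rfl fun j _ => ?_
          rw [hlap_pd j, Finset.mul_sum]
  have hHdef : ∑ i, ∑ j, ePd (ePd F j) i x * ePd (ePd F j) i x = eHessSq F x := by
    unfold eHessSq eHess
    exact Finset.sum_congr rfl fun i _ => Finset.sum_congr rfl fun j _ => (sq _).symm
  have hLdef : ∑ i, ePd (ePd F i) i x = eLap F x := rfl
  have hS2 : (∑ i, w2 (rho x) * ((∑ j, (ePd (ePd F j) i x * ePd (ePd F j) i x
          + ePd F j x * ePd (ePd (ePd F j) i) i x))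
        - (ePd (ePd F i) i x * eLap F x + ePd F i x * ePd (eLap F) i x)))
      = w2 (rho x) * (eHessSq F x - (eLap F x) ^ 2) := by
    rw [← Finset.mul_sum]
    congr 1
    have expand : (∑ i, ((∑ j, (ePd (ePd F j) i x * ePd (ePd F j) i x
            + ePd F j x * ePd (ePd (ePd F j) i) i x))
          - (ePd (ePd F i) i x * eLap F x + ePd F i x * ePd (eLap F) i x)))
        = (∑ i, ∑ j, ePd (ePd F j) i x * ePd (ePd F j) i x)
          + (∑ i, ∑ j, ePd F j x * ePd (ePd (ePd F j) i) i x)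
          - (∑ i, ePd (ePd F i) i x) * eLap F x
          - ∑ i, ePd F i x * ePd (eLap F) i x := by
      simp only [Finset.sum_add_distrib, Finset.sum_sub_distrib, Finset.sum_mul]
      ring
    rw [expand, hT, hHdef, hLdef]
    ring
  rw [hsplit, hS1, hS2]
  ring

end SphAux

namespace SphAux
variable {n : ℕ} {u : Euc n → ℝ}

lemma hHess_sm (hsm : ContDiffOn ℝ ∞ (sphExt u) (Ω n)) :
    ContDiffOn ℝ ∞ (eHessSq (sphExt u)) (Ω n) := by
  unfold eHessSq eHess
  exact ContDiffOn.sum fun i _ => ContDiffOn.sum fun j _ => (hQ hsm i j).pow 2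

lemma deriv_w1_smooth : ContDiff ℝ ∞ (deriv w1) := (contDiff_infty_iff_deriv.mp w1_smooth).2
lemma deriv_w2_smooth : ContDiff ℝ ∞ (deriv w2) := (contDiff_infty_iff_deriv.mp w2_smooth).2

lemma deriv_w2_eq (s : ℝ) : deriv w2 s = deriv w1 s * s + w1 s := by
  have h1 : HasDerivAt w1 (deriv w1 s) s :=
    ((w1_smooth.differentiable (by norm_num)) s).hasDerivAt
  have h2 : HasDerivAt w2 (deriv w1 s * s + w1 s * 1) s := by
    have := h1.mul (hasDerivAt_id s)
    have he : w2 = fun t => w1 t * t := by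
      funext t
      simp [w1, w2, sq]
      ring
    rw [he]
    exact this
  rw [h2.deriv]
  ring

-- pointwise star identity
lemma star_pointwise (hsm : ContDiffOn ℝ ∞ (sphExt u) (Ω n))
    (heq : ∀ θ ∈ Metric.sphere (0 : Euc n) 1,
      ((n : ℝ) - 1) * ((n : ℝ) - 6) * (u θ) ^ 2 - 2 * ((n : ℝ) - 4) * u θ * sphLap u θ
        - 8 * sphGradSq u θ + (sphLap u θ) ^ 2 - sphHessSq u θ = 0)
    {x : Euc n} (hx : x ∈ Ω n) :
    ((n : ℝ) - 1) * ((n : ℝ) - 6) * (etaB (rho x) * (sphExt u x) ^ 2)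
      - 2 * ((n : ℝ) - 4) * (w1 (rho x) * (sphExt u x * eLap (sphExt u) x))
      - 6 * (w1 (rho x) * eGradSq (sphExt u) x)
      + w2 (rho x) * ((eLap (sphExt u) x) ^ 2 - eHessSq (sphExt u) x) = 0 := by
  set F := sphExt u with hF
  have hx0 : x ≠ 0 := hx
  set c := ‖x‖ with hc
  have hcpos : 0 < c := norm_pos_iff.2 hx0
  set θ := (‖x‖⁻¹ : ℝ) • x with hθ
  have hθ0 : θ ≠ 0 := by
    rw [hθ]
    exact smul_ne_zero (inv_ne_zero (norm_ne_zero_iff.2 hx0)) hx0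
  have hθΩ : θ ∈ Ω n := hθ0
  have hθs : θ ∈ Metric.sphere (0 : Euc n) 1 := by
    rw [mem_sphere, dist_eq_norm, sub_zero]
    exact norm_smul_inv_norm (𝕜 := ℝ) hx0
  have hxcθ : x = c • θ := by
    rw [hθ, smul_smul, hc, mul_inv_cancel₀ (norm_ne_zero_iff.2 hx0), one_smul]
  have hrho : rho x = c * c := by
    rw [rho_eq_norm_sq, hc, sq]
  have hcc : c⁻¹ * c⁻¹ * (c * c) = 1 := by
    field_simp
  -- values at θ in terms of values at x
  have hL : eLap F θ = (c * c) * eLap F x := by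
    have := lap_hom hsm hcpos hθΩ
    rw [← hxcθ] at this
    rw [this]
    rw [← mul_assoc, mul_comm (c * c), hcc, one_mul]
  have hG : eGradSq F θ = (c * c) * eGradSq F x := by
    have := grad_hom hsm hcpos hθΩ
    rw [← hxcθ] at this
    rw [this]
    rw [← mul_assoc, mul_comm (c * c), hcc, one_mul]
  have hH : eHessSq F θ = (c * c) ^ 2 * eHessSq F x := by
    have := hess_hom hsm hcpos hθΩ
    rw [← hxcθ] at this
    rw [this]
    rw [← mul_assoc, ← mul_pow, mul_comm (c * c), hcc, one_pow, one_mul]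
  have huθ : u θ = F x := by
    rw [hF, sphExt, hθ]
  have heqθ := heq θ hθs
  rw [sphLap, sphGradSq, sphHessSq, ← hF, hL, hG, hH, huθ] at heqθ
  have hw1 : w1 (rho x) = etaB (rho x) * rho x := rfl
  have hw2 : w2 (rho x) = etaB (rho x) * rho x ^ 2 := rfl
  rw [hw1, hw2, hrho]
  linear_combination etaB (c * c) * heqθ

end SphAux

namespace SphAux
variable {n : ℕ} {u : Euc n → ℝ}

lemma A_eq_zero (hn3 : 3 ≤ n) (hn6 : n ≠ 6) (hsm : ContDiffOn ℝ ∞ (sphExt u) (Ω n))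
    (heq : ∀ θ ∈ Metric.sphere (0 : Euc n) 1,
      ((n : ℝ) - 1) * ((n : ℝ) - 6) * (u θ) ^ 2 - 2 * ((n : ℝ) - 4) * u θ * sphLap u θ
        - 8 * sphGradSq u θ + (sphLap u θ) ^ 2 - sphHessSq u θ = 0) :
    ∫ x : Euc n, etaB (rho x) * (sphExt u x) ^ 2 = 0 := by
  have hn : 0 < n := by omega
  set F := sphExt u with hF
  have iA : Integrable (fun x : Euc n => etaB (rho x) * F x ^ 2) :=
    cut_integrable etaB_smooth (fun s hs => etaB_lt hs) (fun s hs => etaB_gt hs) (hsm.pow 2)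
  have iB : Integrable (fun x : Euc n => w1 (rho x) * eGradSq F x) :=
    cut_integrable w1_smooth (fun s hs => w1_lt hs) (fun s hs => w1_gt hs) (hGrad hsm)
  have iC : Integrable (fun x : Euc n => w1 (rho x) * (F x * eLap F x)) :=
    cut_integrable w1_smooth (fun s hs => w1_lt hs) (fun s hs => w1_gt hs)
      (hsm.mul (hLap hsm))
  have iD : Integrable (fun x : Euc n => w2 (rho x) * (eLap F x) ^ 2) :=
    cut_integrable w2_smooth (fun s hs => w2_lt hs) (fun s hs => w2_gt hs) ((hLap hsm).pow 2)
  have iE : Integrable (fun x : Euc n => w2 (rho x) * eHessSq F x) :=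
    cut_integrable w2_smooth (fun s hs => w2_lt hs) (fun s hs => w2_gt hs) (hHess_sm hsm)
  have iB1 : Integrable (fun x : Euc n => (deriv w1 (rho x) * rho x) * eGradSq F x) :=
    cut_integrable (deriv_w1_smooth.mul contDiff_id)
      (fun s hs => by simp [deriv_lt (fun t ht => w1_lt ht) hs])
      (fun s hs => by simp [deriv_gt (fun t ht => w1_gt ht) hs]) (hGrad hsm)
  have iB2 : Integrable (fun x : Euc n => deriv w2 (rho x) * eGradSq F x) :=
    cut_integrable deriv_w2_smooth
      (fun s hs => by simp [deriv_lt (fun t ht => w2_lt ht) hs])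
      (fun s hs => by simp [deriv_gt (fun t ht => w2_gt ht) hs]) (hGrad hsm)
  -- identity I split
  have e1 : (∫ x : Euc n, w1 (rho x) * eGradSq F x)
      + (∫ x : Euc n, w1 (rho x) * (F x * eLap F x)) = 0 := by
    have h := idI hn hsm
    rw [show (fun x : Euc n => w1 (rho x) * (eGradSq F x + F x * eLap F x))
        = fun x : Euc n => w1 (rho x) * eGradSq F x + w1 (rho x) * (F x * eLap F x) from
      funext fun x => by ring] at h
    rwa [integral_add iB iC] at h
  -- identity III split
  have e3 : 2 * (∫ x : Euc n, (deriv w1 (rho x) * rho x) * eGradSq F x)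
      + ((n:ℝ) - 2) * (∫ x : Euc n, w1 (rho x) * eGradSq F x) = 0 := by
    have h := idIII hn hsm
    rw [show (fun x : Euc n => 2 * deriv w1 (rho x) * rho x * eGradSq F x
          + ((n:ℝ) - 2) * (w1 (rho x) * eGradSq F x))
        = fun x : Euc n => 2 * ((deriv w1 (rho x) * rho x) * eGradSq F x)
          + ((n:ℝ) - 2) * (w1 (rho x) * eGradSq F x) from
      funext fun x => by ring] at h
    have i1 : Integrable (fun x : Euc n => 2 * ((deriv w1 (rho x) * rho x) * eGradSq F x))
        (volume : Measure (Euc n)) := iB1.const_mul 2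
    have i2 : Integrable (fun x : Euc n => ((n:ℝ) - 2) * (w1 (rho x) * eGradSq F x))
        (volume : Measure (Euc n)) := iB.const_mul _
    rwa [integral_add i1 i2, integral_const_mul, integral_const_mul] at h
  -- identity II split
  have e2 : ((∫ x : Euc n, w2 (rho x) * eHessSq F x)
        - (∫ x : Euc n, w2 (rho x) * (eLap F x) ^ 2))
      - 2 * (∫ x : Euc n, deriv w2 (rho x) * eGradSq F x) = 0 := by
    have h := idII hn hsm
    rw [show (fun x : Euc n => w2 (rho x) * (eHessSq F x - (eLap F x) ^ 2)
          - 2 * deriv w2 (rho x) * eGradSq F x)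
        = fun x : Euc n => (w2 (rho x) * eHessSq F x - w2 (rho x) * (eLap F x) ^ 2)
          - 2 * (deriv w2 (rho x) * eGradSq F x) from
      funext fun x => by ring] at h
    have i1 : Integrable (fun x : Euc n => w2 (rho x) * eHessSq F x
        - w2 (rho x) * (eLap F x) ^ 2) (volume : Measure (Euc n)) := iE.sub iD
    have i2 : Integrable (fun x : Euc n => 2 * (deriv w2 (rho x) * eGradSq F x))
        (volume : Measure (Euc n)) := iB2.const_mul 2
    rwa [integral_sub i1 i2, integral_sub iE iD, integral_const_mul] at h
  -- w-link
  have ew : (∫ x : Euc n, deriv w2 (rho x) * eGradSq F x)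
      = (∫ x : Euc n, (deriv w1 (rho x) * rho x) * eGradSq F x)
        + (∫ x : Euc n, w1 (rho x) * eGradSq F x) := by
    rw [show (fun x : Euc n => deriv w2 (rho x) * eGradSq F x)
        = fun x : Euc n => (deriv w1 (rho x) * rho x) * eGradSq F x
          + w1 (rho x) * eGradSq F x from
      funext fun x => by rw [deriv_w2_eq]; ring]
    exact integral_add iB1 iB
  -- star identity integrated
  have es : (((n:ℝ) - 1) * ((n:ℝ) - 6)) * (∫ x : Euc n, etaB (rho x) * F x ^ 2)
      - (2 * ((n:ℝ) - 4)) * (∫ x : Euc n, w1 (rho x) * (F x * eLap F x))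
      - 6 * (∫ x : Euc n, w1 (rho x) * eGradSq F x)
      + ((∫ x : Euc n, w2 (rho x) * (eLap F x) ^ 2)
        - (∫ x : Euc n, w2 (rho x) * eHessSq F x)) = 0 := by
    have hz : ∫ x : Euc n, ((((n:ℝ) - 1) * ((n:ℝ) - 6)) * (etaB (rho x) * F x ^ 2)
        - (2 * ((n:ℝ) - 4)) * (w1 (rho x) * (F x * eLap F x))
        - 6 * (w1 (rho x) * eGradSq F x)
        + (w2 (rho x) * (eLap F x) ^ 2 - w2 (rho x) * eHessSq F x)) = 0 := by
      apply integral_eq_zero_of_ae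
      apply ae_off_zero hn
      intro x hx
      have := star_pointwise hsm heq hx
      rw [← hF] at this
      show _ = (0 : ℝ)
      linear_combination this
    have j1 : Integrable (fun x : Euc n => (((n:ℝ) - 1) * ((n:ℝ) - 6)) * (etaB (rho x) * F x ^ 2))
        (volume : Measure (Euc n)) := iA.const_mul _
    have j2 : Integrable (fun x : Euc n => (2 * ((n:ℝ) - 4)) * (w1 (rho x) * (F x * eLap F x)))
        (volume : Measure (Euc n)) := iC.const_mul _
    have j3 : Integrable (fun x : Euc n => 6 * (w1 (rho x) * eGradSq F x))
        (volume : Measure (Euc n)) := iB.const_mul _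
    have j12 : Integrable (fun x : Euc n => (((n:ℝ) - 1) * ((n:ℝ) - 6)) * (etaB (rho x) * F x ^ 2)
        - (2 * ((n:ℝ) - 4)) * (w1 (rho x) * (F x * eLap F x))) (volume : Measure (Euc n)) :=
      j1.sub j2
    have j123 : Integrable (fun x : Euc n =>
        ((((n:ℝ) - 1) * ((n:ℝ) - 6)) * (etaB (rho x) * F x ^ 2)
          - (2 * ((n:ℝ) - 4)) * (w1 (rho x) * (F x * eLap F x)))
        - 6 * (w1 (rho x) * eGradSq F x)) (volume : Measure (Euc n)) := j12.sub j3
    have j45 : Integrable (fun x : Euc n => w2 (rho x) * (eLap F x) ^ 2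
        - w2 (rho x) * eHessSq F x) (volume : Measure (Euc n)) := iD.sub iE
    rwa [integral_add j123 j45, integral_sub j12 j3, integral_sub j1 j2, integral_const_mul,
      integral_const_mul, integral_const_mul, integral_sub iD iE] at hz
  -- nonnegativity
  have hA : 0 ≤ ∫ x : Euc n, etaB (rho x) * F x ^ 2 :=
    integral_nonneg fun x => mul_nonneg (etaB_nonneg _) (sq_nonneg _)
  have hB : 0 ≤ ∫ x : Euc n, w1 (rho x) * eGradSq F x :=
    integral_nonneg fun x => mul_nonneg (mul_nonneg (etaB_nonneg _) (rho_nonneg _))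
      (Finset.sum_nonneg fun i _ => sq_nonneg _)
  have hN3 : (3:ℝ) ≤ (n:ℝ) := by exact_mod_cast hn3
  have hN6 : ((n:ℝ) - 6) ≠ 0 := by
    intro h
    apply hn6
    have : (n:ℝ) = 6 := by linarith
    exact_mod_cast this
  have heq2 : ((n:ℝ) - 6) * (((n:ℝ) - 1) * (∫ x : Euc n, etaB (rho x) * F x ^ 2)
      + 3 * (∫ x : Euc n, w1 (rho x) * eGradSq F x)) = 0 := by
    linear_combination es + (2 * ((n:ℝ) - 4)) * e1 + e2 + 2 * ew + e3
  have heq3 : ((n:ℝ) - 1) * (∫ x : Euc n, etaB (rho x) * F x ^ 2)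
      + 3 * (∫ x : Euc n, w1 (rho x) * eGradSq F x) = 0 :=
    (mul_eq_zero.1 heq2).resolve_left hN6
  nlinarith [hA, hB, hN3, heq3]

end SphAux
end

theorem stmt_5 {n : ℕ} (hn : 3 ≤ n) (hn6 : n ≠ 6) (u : Euc n → ℝ) (hu : SphSmooth u)
    (heq : ∀ θ ∈ Metric.sphere (0 : Euc n) 1,
      ((n : ℝ) - 1) * ((n : ℝ) - 6) * (u θ) ^ 2 - 2 * ((n : ℝ) - 4) * u θ * sphLap u θ
        - 8 * sphGradSq u θ + (sphLap u θ) ^ 2 - sphHessSq u θ = 0) :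
    ∀ θ ∈ Metric.sphere (0 : Euc n) 1, u θ = 0 := by
  intro θ hθ
  have hsm : ContDiffOn ℝ ∞ (sphExt u) (SphAux.Ω n) := hu.of_le (by simp)
  have hA := SphAux.A_eq_zero hn hn6 hsm heq
  have iA : Integrable (fun x : Euc n => SphAux.etaB (SphAux.rho x) * (sphExt u x) ^ 2)
      (volume : Measure (Euc n)) :=
    SphAux.cut_integrable SphAux.etaB_smooth (fun s hs => SphAux.etaB_lt hs)
      (fun s hs => SphAux.etaB_gt hs) (hsm.pow 2)
  have hcont : Continuous (fun x : Euc n => SphAux.etaB (SphAux.rho x) * (sphExt u x) ^ 2) :=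
    (SphAux.cut_smooth SphAux.etaB_smooth (fun s hs => SphAux.etaB_lt hs) (hsm.pow 2)).continuous
  have hzero : (fun x : Euc n => SphAux.etaB (SphAux.rho x) * (sphExt u x) ^ 2)
      = fun _ => (0:ℝ) := by
    rw [← Continuous.ae_eq_iff_eq (volume : Measure (Euc n)) hcont continuous_const]
    exact (integral_eq_zero_iff_of_nonneg
      (fun x => mul_nonneg (SphAux.etaB_nonneg _) (sq_nonneg _)) iA).1 hA
  have hθ1 : ‖θ‖ = 1 := by
    rw [mem_sphere, dist_eq_norm, sub_zero] at hθ
    exact hθ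
  have hθ0 : θ ≠ 0 := by
    intro h
    rw [h] at hθ1
    simp at hθ1
  have hval := congrFun hzero ((2:ℝ) • θ)
  have hrho2 : SphAux.rho ((2:ℝ) • θ) = 4 := by
    rw [SphAux.rho_eq_norm_sq, norm_smul, hθ1]
    norm_num
  have hext2 : sphExt u ((2:ℝ) • θ) = u θ := by
    rw [SphAux.sphExt_smul (by norm_num : (0:ℝ) < 2) hθ0]
    rw [sphExt, hθ1]
    norm_num
  rw [hrho2, hext2, SphAux.etaB_four, one_mul] at hval
  exact pow_eq_zero_iff (by norm_num) |>.1 hval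

end
end

section
/- Let A₃ be a homogeneous polynomial of degree 3 on ℝ⁶ such that r² = x₁²+⋯+x₆² divides A₃, and write A₃(x) = |x|² H₁(x) with H₁ linear. If the restriction u = A₃|_{S⁵} satisfies the equation −4uΔ_θ u − 8|∇_θ u|² + (Δ_θ u)² − |∇²_θ u|² = 0 on S⁵, then A₃ ≡ 0. -/
open scoped RealInnerProductSpace
open MeasureTheory Metric

noncomputable section

namespace S19

def psi (t : ℝ) : ℝ := -(1 / (2 * Real.sqrt t)) / Real.sqrt t ^ 2

lemma psi_one : psi 1 = -(1/2) := by simp [psi]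

lemma hasDerivAt_invsqrt {t : ℝ} (ht : 0 < t) :
    HasDerivAt (fun s => (Real.sqrt s)⁻¹) (psi t) t :=
  (Real.hasDerivAt_sqrt ht.ne').inv (Real.sqrt_ne_zero'.mpr ht)

lemma diff_psi : DifferentiableAt ℝ psi 1 := by
  have hs : DifferentiableAt ℝ Real.sqrt 1 := (Real.hasDerivAt_sqrt one_ne_zero).differentiableAt
  have h2 : DifferentiableAt ℝ (fun t => 2 * Real.sqrt t) 1 := hs.const_mul 2
  have h3 : DifferentiableAt ℝ (fun t => 1 / (2 * Real.sqrt t)) 1 :=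
    (differentiableAt_const 1).div h2 (by simp)
  have h4 : DifferentiableAt ℝ (fun t => Real.sqrt t ^ 2) 1 := hs.pow 2
  exact (h3.neg).div h4 (by simp)

def Fa (a : Euc 6) (x : Euc 6) : ℝ := ⟪a, x⟫ * (Real.sqrt (‖x‖ ^ 2))⁻¹

lemma hasFDerivAt_Fa (a : Euc 6) {x : Euc 6} (hx : x ≠ 0) :
    HasFDerivAt (Fa a)
      (⟪a, x⟫ • (psi (‖x‖ ^ 2) • (2 • innerSL ℝ x)) + (Real.sqrt (‖x‖ ^ 2))⁻¹ • innerSL ℝ a) x := by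
  have h1 : HasFDerivAt (fun y : Euc 6 => ⟪a, y⟫) (innerSL ℝ a) x := (innerSL ℝ a).hasFDerivAt
  have h2 : HasFDerivAt (fun y : Euc 6 => ‖y‖ ^ 2) (2 • innerSL ℝ x) x :=
    (hasStrictFDerivAt_norm_sq x).hasFDerivAt
  have h3 : HasFDerivAt (fun y : Euc 6 => (Real.sqrt (‖y‖ ^ 2))⁻¹)
      (psi (‖x‖ ^ 2) • (2 • innerSL ℝ x)) x :=
    by have h := (hasDerivAt_invsqrt (pow_pos (norm_pos_iff.mpr hx) 2)).comp_hasFDerivAt x h2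
       exact h
  exact h1.mul h3

def Ga (a : Euc 6) (j : Fin 6) (x : Euc 6) : ℝ :=
  ⟪a, bvec 6 j⟫ * (Real.sqrt (‖x‖ ^ 2))⁻¹ + ⟪a, x⟫ * (psi (‖x‖ ^ 2) * (2 * ⟪x, bvec 6 j⟫))

lemma ePd_Fa (a : Euc 6) {x : Euc 6} (hx : x ≠ 0) (j : Fin 6) :
    ePd (Fa a) j x = Ga a j x := by
  rw [ePd, (hasFDerivAt_Fa a hx).fderiv]
  simp [Ga, ContinuousLinearMap.add_apply, ContinuousLinearMap.smul_apply, innerSL_apply_apply,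
    smul_eq_mul]
  ring

lemma Ga_fderiv (a : Euc 6) {θ : Euc 6} (hθ : ‖θ‖ = 1) (haθ : ⟪a, θ⟫ = 0) (i j : Fin 6) :
    fderiv ℝ (Ga a j) θ (bvec 6 i)
      = -(⟪a, bvec 6 j⟫ * ⟪θ, bvec 6 i⟫ + ⟪θ, bvec 6 j⟫ * ⟪a, bvec 6 i⟫) := by
  have hn2 : ‖θ‖ ^ 2 = 1 := by rw [hθ]; norm_num
  have h2 : HasFDerivAt (fun y : Euc 6 => ‖y‖ ^ 2) (2 • innerSL ℝ θ) θ :=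
    (hasStrictFDerivAt_norm_sq θ).hasFDerivAt
  have h3 : HasFDerivAt (fun y : Euc 6 => (Real.sqrt (‖y‖ ^ 2))⁻¹)
      (psi (‖θ‖ ^ 2) • (2 • innerSL ℝ θ)) θ :=
    (hasDerivAt_invsqrt (by rw [hn2]; norm_num)).comp_hasFDerivAt θ h2
  have hψ : DifferentiableAt ℝ (fun y : Euc 6 => psi (‖y‖ ^ 2)) θ := by
    have hd : DifferentiableAt ℝ psi (‖θ‖ ^ 2) := by rw [hn2]; exact diff_psi
    exact hd.comp θ h2.differentiableAt
  have hlin : DifferentiableAt ℝ (fun y : Euc 6 => ⟪y, bvec 6 j⟫) θ := by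
    have : (fun y : Euc 6 => ⟪y, bvec 6 j⟫) = fun y : Euc 6 => ⟪bvec 6 j, y⟫ :=
      funext fun y => real_inner_comm _ _
    rw [this]
    exact (innerSL ℝ (bvec 6 j)).differentiableAt
  have hh : DifferentiableAt ℝ (fun y : Euc 6 => psi (‖y‖ ^ 2) * (2 * ⟪y, bvec 6 j⟫)) θ :=
    hψ.mul (hlin.const_mul 2)
  have hI : HasFDerivAt (fun y : Euc 6 => ⟪a, y⟫) (innerSL ℝ a) θ := (innerSL ℝ a).hasFDerivAt
  have hhh : HasFDerivAt (fun y : Euc 6 => psi (‖y‖ ^ 2) * (2 * ⟪y, bvec 6 j⟫))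
      (fderiv ℝ (fun y : Euc 6 => psi (‖y‖ ^ 2) * (2 * ⟪y, bvec 6 j⟫)) θ) θ := hh.hasFDerivAt
  have hT : HasFDerivAt (Ga a j)
      (⟪a, bvec 6 j⟫ • (psi (‖θ‖ ^ 2) • (2 • innerSL ℝ θ))
        + (⟪a, θ⟫ • fderiv ℝ (fun y : Euc 6 => psi (‖y‖ ^ 2) * (2 * ⟪y, bvec 6 j⟫)) θ
           + (psi (‖θ‖ ^ 2) * (2 * ⟪θ, bvec 6 j⟫)) • innerSL ℝ a)) θ :=
    (h3.const_mul _).add (hI.mul hhh)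
  rw [hT.fderiv]
  rw [haθ, hn2, psi_one]
  simp only [ContinuousLinearMap.add_apply, ContinuousLinearMap.smul_apply, innerSL_apply_apply,
    smul_eq_mul, zero_smul, ContinuousLinearMap.zero_apply, zero_mul, zero_add,
    ContinuousLinearMap.coe_smul', Pi.smul_apply, nsmul_eq_mul, Nat.cast_ofNat]
  ring

lemma sphExt_eq (A₃ : Euc 6 → ℝ) (a : Euc 6) (hA : ∀ x, A₃ x = ‖x‖ ^ 2 * ⟪a, x⟫)
    {x : Euc 6} (hx : x ≠ 0) : sphExt A₃ x = Fa a x := by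
  have h1 : ‖x‖ ≠ 0 := norm_ne_zero_iff.mpr hx
  rw [sphExt, hA, Fa, Real.sqrt_sq (norm_nonneg x), norm_smul, real_inner_smul_right,
    norm_inv, norm_norm, inv_mul_cancel₀ h1]
  ring

lemma ePd_sphExt (A₃ : Euc 6 → ℝ) (a : Euc 6) (hA : ∀ x, A₃ x = ‖x‖ ^ 2 * ⟪a, x⟫)
    {x : Euc 6} (hx : x ≠ 0) (j : Fin 6) : ePd (sphExt A₃) j x = Ga a j x := by
  have hev : sphExt A₃ =ᶠ[nhds x] Fa a := by
    filter_upwards [IsOpen.mem_nhds isOpen_compl_singleton hx] with y hy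
    exact sphExt_eq A₃ a hA hy
  rw [ePd, hev.fderiv_eq, ← ePd, ePd_Fa a hx j]

lemma ePd_sphExt_at (A₃ : Euc 6 → ℝ) (a : Euc 6) (hA : ∀ x, A₃ x = ‖x‖ ^ 2 * ⟪a, x⟫)
    {θ : Euc 6} (hθ : ‖θ‖ = 1) (haθ : ⟪a, θ⟫ = 0) (j : Fin 6) :
    ePd (sphExt A₃) j θ = ⟪a, bvec 6 j⟫ := by
  have hθ0 : θ ≠ 0 := by intro h; rw [h] at hθ; simp at hθ
  rw [ePd_sphExt A₃ a hA hθ0 j, Ga, hθ, haθ]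
  norm_num

lemma eHess_sphExt (A₃ : Euc 6 → ℝ) (a : Euc 6) (hA : ∀ x, A₃ x = ‖x‖ ^ 2 * ⟪a, x⟫)
    {θ : Euc 6} (hθ : ‖θ‖ = 1) (haθ : ⟪a, θ⟫ = 0) (i j : Fin 6) :
    eHess (sphExt A₃) i j θ
      = -(⟪a, bvec 6 j⟫ * ⟪θ, bvec 6 i⟫ + ⟪θ, bvec 6 j⟫ * ⟪a, bvec 6 i⟫) := by
  have hθ0 : θ ≠ 0 := by intro h; rw [h] at hθ; simp at hθ
  have hev : ePd (sphExt A₃) j =ᶠ[nhds θ] Ga a j := by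
    filter_upwards [IsOpen.mem_nhds isOpen_compl_singleton hθ0] with y hy
    exact ePd_sphExt A₃ a hA hy j
  rw [eHess, ePd, hev.fderiv_eq]
  exact Ga_fderiv a hθ haθ i j

lemma inner_bvec (v : Euc 6) (i : Fin 6) : ⟪v, bvec 6 i⟫ = v i := by
  simp [bvec, EuclideanSpace.inner_single_right]

end S19

theorem stmt_19 (A₃ : Euc 6 → ℝ) (a : Euc 6)
    (hA : ∀ x, A₃ x = ‖x‖ ^ 2 * ⟪a, x⟫)
    (heq : ∀ θ ∈ Metric.sphere (0 : Euc 6) 1,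
      -4 * A₃ θ * sphLap A₃ θ - 8 * sphGradSq A₃ θ
        + (sphLap A₃ θ) ^ 2 - sphHessSq A₃ θ = 0) :
    ∀ x, A₃ x = 0 := by
  by_cases ha : a = 0
  · intro x; rw [hA x, ha, inner_zero_left, mul_zero]
  · exfalso
    -- construct a unit vector orthogonal to a
    set v : Euc 6 := (WithLp.equiv 2 (Fin 6 → ℝ)).symm
      ![a 1, -(a 0), a 3, -(a 2), a 5, -(a 4)] with hv_def
    have hc0 : v 0 = a 1 := rfl
    have hc1 : v 1 = -(a 0) := rfl
    have hc2 : v 2 = a 3 := rfl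
    have hc3 : v 3 = -(a 2) := rfl
    have hc4 : v 4 = a 5 := rfl
    have hc5 : v 5 = -(a 4) := rfl
    have hav : ⟪a, v⟫ = 0 := by
      simp only [PiLp.inner_apply, RCLike.inner_apply, conj_trivial, Fin.sum_univ_six,
        hc0, hc1, hc2, hc3, hc4, hc5]
      ring
    have hv0 : v ≠ 0 := by
      intro h
      apply ha
      have hz : ∀ i : Fin 6, v i = 0 := fun i => by rw [h]; rfl
      have h0 := hz 0; have h1 := hz 1; have h2 := hz 2
      have h3 := hz 3; have h4 := hz 4; have h5 := hz 5
      rw [hc0] at h0; rw [hc1] at h1; rw [hc2] at h2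
      rw [hc3] at h3; rw [hc4] at h4; rw [hc5] at h5
      have e0 : a 0 = 0 := by linarith
      have e2 : a 2 = 0 := by linarith
      have e4 : a 4 = 0 := by linarith
      ext i
      fin_cases i <;> simp_all
    set θ : Euc 6 := ‖v‖⁻¹ • v with hθ_def
    have hθn : ‖θ‖ = 1 := norm_smul_inv_norm hv0
    have haθ : ⟪a, θ⟫ = 0 := by rw [hθ_def, real_inner_smul_right, hav, mul_zero]
    have hθmem : θ ∈ Metric.sphere (0 : Euc 6) 1 := mem_sphere_zero_iff_norm.mpr hθn
    -- coordinate sums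
    have hsum_at : ∑ i, a i * θ i = 0 := by
      have h := haθ
      simp only [PiLp.inner_apply, RCLike.inner_apply, conj_trivial] at h
      rw [← h]; exact Finset.sum_congr rfl fun i _ => mul_comm _ _
    have hsum_tt : ∑ i, θ i * θ i = 1 := by
      have h : ⟪θ, θ⟫ = 1 := by rw [real_inner_self_eq_norm_sq, hθn]; norm_num
      simp only [PiLp.inner_apply, RCLike.inner_apply, conj_trivial] at h
      exact h
    -- values of the operators at θ
    have hess : ∀ i j : Fin 6, eHess (sphExt A₃) i j θ = -(a j * θ i + θ j * a i) := by
      intro i j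
      rw [S19.eHess_sphExt A₃ a hA hθn haθ i j, S19.inner_bvec, S19.inner_bvec,
        S19.inner_bvec, S19.inner_bvec]
    have hpd : ∀ j : Fin 6, ePd (sphExt A₃) j θ = a j := by
      intro j
      rw [S19.ePd_sphExt_at A₃ a hA hθn haθ j, S19.inner_bvec]
    have HL : sphLap A₃ θ = 0 := by
      rw [sphLap, eLap]
      have : ∀ i : Fin 6, ePd (ePd (sphExt A₃) i) i θ = (-2) * (a i * θ i) := by
        intro i
        have := hess i i
        rw [eHess] at this
        rw [this]; ring
      rw [Finset.sum_congr rfl fun i _ => this i, ← Finset.mul_sum, hsum_at, mul_zero]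
    have HG : sphGradSq A₃ θ = ∑ i, a i * a i := by
      rw [sphGradSq, eGradSq]
      exact Finset.sum_congr rfl fun i _ => by rw [hpd i]; ring
    have key : ∀ f g : Fin 6 → ℝ,
        ∑ i, ∑ j, f i * g j = (∑ i, f i) * (∑ j, g j) := fun f g =>
      (Finset.sum_mul_sum _ _ _ _).symm
    have HH : eHessSq (sphExt A₃) θ = 2 * ∑ i, a i * a i := by
      rw [eHessSq]
      have e1 : ∀ i j : Fin 6, eHess (sphExt A₃) i j θ ^ 2
          = (θ i * θ i) * (a j * a j) + ((a i * a i) * (θ j * θ j)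
            + (2 * (a i * θ i)) * (a j * θ j)) := by
        intro i j; rw [hess i j]; ring
      calc ∑ i, ∑ j, eHess (sphExt A₃) i j θ ^ 2
          = ∑ i, ∑ j, ((θ i * θ i) * (a j * a j) + ((a i * a i) * (θ j * θ j)
              + (2 * (a i * θ i)) * (a j * θ j))) := by
            exact Finset.sum_congr rfl fun i _ => Finset.sum_congr rfl fun j _ => e1 i j
        _ = (∑ i, θ i * θ i) * (∑ j, a j * a j) + ((∑ i, a i * a i) * (∑ j, θ j * θ j)
              + (∑ i, 2 * (a i * θ i)) * (∑ j, a j * θ j)) := by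
            simp only [Finset.sum_add_distrib, key]
        _ = 2 * ∑ i, a i * a i := by
            rw [hsum_tt, hsum_at]
            have : ∑ i, 2 * (a i * θ i) = 0 := by rw [← Finset.mul_sum, hsum_at, mul_zero]
            rw [this]; ring
    have HHs : sphHessSq A₃ θ = 0 := by
      rw [sphHessSq, HH]
      have : eGradSq (sphExt A₃) θ = ∑ i, a i * a i := HG
      rw [this]; ring
    have HA : A₃ θ = 0 := by rw [hA θ, haθ, mul_zero]
    have heqθ := heq θ hθmem
    rw [HL, HG, HHs, HA] at heqθ
    have hS : ∑ i, a i * a i = 0 := by linarith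
    have : ⟪a, a⟫ = 0 := by
      simp only [PiLp.inner_apply, RCLike.inner_apply, conj_trivial]
      exact hS
    exact ha (inner_self_eq_zero.mp this)


end
end
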